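/- arXiv:math/0505353 — 3 statements merged into one kernel-verified Lean document; each statement's English description precedes it below -/
import Mathlib

section
/- Fact I (Robust Forward Completeness estimate). Suppose system (1.1) satisfies hypothesis (H1). Then there exist functions μ ∈ K⁺ and a ∈ K∞ such that for every disturbance sequence d : ℕ → D, every initial time t₀ ∈ ℕ and every initial state x₀ ∈ X, the unique solution x(·) of (1.1) with x(t₀) = x₀ satisfies ‖x(t)‖_X ≤ μ(t) · a(‖x₀‖_X) for all t ≥ t₀. -/
/-!
Iterating (H1) bounds a solution at time `t` by `P t ‖x₀‖`, where `P` is continuous and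
nondecreasing in both variables with `P t 0 = 0`. Any such `P` splits as `μ t * a s`. For
`s ≤ 1` compare `P t s` with the series `∑ 2⁻ⁿ min (P n s) 1`, which is continuous,
increasing and vanishes at `0`. For `s ≥ 1` use `P t s ≤ P t t + P ⌈s⌉ ⌈s⌉` and a continuous
increasing interpolation of the diagonal `n ↦ P n n`; the same interpolation turns any
sequence into a dominating `K⁺` function `μ`.
-/

open Filter Topology Bornology Set

noncomputable section

/-- Class `K∞`: continuous, strictly increasing on `[0,∞)`, zero at zero, unbounded. -/
def IsKInf (a : ℝ → ℝ) : Prop :=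
  ContinuousOn a (Set.Ici 0) ∧ StrictMonoOn a (Set.Ici 0) ∧ a 0 = 0 ∧
    Filter.Tendsto a Filter.atTop Filter.atTop

/-- Class `K⁺`: continuous and positive on `[0,∞)`. -/
def IsKPlus (b : ℝ → ℝ) : Prop :=
  ContinuousOn b (Set.Ici 0) ∧ ∀ t : ℝ, 0 ≤ t → 0 < b t

/-- Class `KL`. -/
def IsKL (σ : ℝ → ℝ → ℝ) : Prop :=
  ContinuousOn (fun p : ℝ × ℝ => σ p.1 p.2) (Set.Ici 0 ×ˢ Set.Ici 0) ∧
  (∀ t : ℝ, 0 ≤ t → StrictMonoOn (fun s => σ s t) (Set.Ici 0) ∧ σ 0 t = 0) ∧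
  (∀ s : ℝ, 0 ≤ s → AntitoneOn (fun t => σ s t) (Set.Ici 0) ∧
    Filter.Tendsto (fun t => σ s t) Filter.atTop (nhds 0))

def ramp (u : ℝ) : ℝ := projIcc (0 : ℝ) 1 zero_le_one u

lemma ramp_nonneg (u : ℝ) : 0 ≤ ramp u := (projIcc (0 : ℝ) 1 zero_le_one u).2.1

lemma ramp_le_one (u : ℝ) : ramp u ≤ 1 := (projIcc (0 : ℝ) 1 zero_le_one u).2.2

@[fun_prop]
lemma continuous_ramp : Continuous ramp := continuous_subtype_val.comp continuous_projIcc

lemma monotone_ramp : Monotone ramp := fun _ _ h => monotone_projIcc zero_le_one h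

lemma ramp_of_nonpos {u : ℝ} (hu : u ≤ 0) : ramp u = 0 := by
  simp [ramp, projIcc_of_le_left _ hu]

lemma ramp_of_one_le {u : ℝ} (hu : 1 ≤ u) : ramp u = 1 := by
  simp [ramp, projIcc_of_right_le _ hu]

lemma ramp_of_mem {u : ℝ} (hu : u ∈ Icc (0 : ℝ) 1) : ramp u = u := by
  simp [ramp, projIcc_of_mem _ hu]

/-- The continuous piecewise linear function vanishing on `(-∞, 0]` with slope `c n` on
`[n, n + 1]`. -/
def rampSum (c : ℕ → ℝ) (s : ℝ) : ℝ := ∑' n, c n * ramp (s - n)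

section rampSum

variable {c : ℕ → ℝ}

lemma rampSum_eq_sum_range (c : ℕ → ℝ) {s : ℝ} {N : ℕ} (hN : s ≤ N) :
    rampSum c s = ∑ n ∈ Finset.range N, c n * ramp (s - n) := by
  refine tsum_eq_sum fun n hn => ?_
  have : s ≤ n := hN.trans (by exact_mod_cast not_lt.1 (Finset.mem_range.not.1 hn))
  rw [ramp_of_nonpos (by linarith), mul_zero]

lemma rampSum_zero (c : ℕ → ℝ) : rampSum c 0 = 0 := by
  rw [rampSum_eq_sum_range c (N := 0) (by simp), Finset.sum_range_zero]

lemma continuous_rampSum (c : ℕ → ℝ) : Continuous (rampSum c) := by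
  refine continuous_iff_continuousAt.2 fun s => ?_
  obtain ⟨N, hN⟩ := exists_nat_gt s
  have hsum : Continuous fun s => ∑ n ∈ Finset.range N, c n * ramp (s - n) := by fun_prop
  refine hsum.continuousAt.congr ?_
  filter_upwards [eventually_lt_nhds hN] with s' hs'
  exact (rampSum_eq_sum_range c hs'.le).symm

lemma monotone_rampSum (hc : ∀ n, 0 ≤ c n) : Monotone (rampSum c) := by
  intro x y hxy
  obtain ⟨N, hN⟩ := exists_nat_ge y
  rw [rampSum_eq_sum_range c (hxy.trans hN), rampSum_eq_sum_range c hN]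
  exact Finset.sum_le_sum fun n _ =>
    mul_le_mul_of_nonneg_left (monotone_ramp (by linarith)) (hc n)

lemma sum_range_le_rampSum (hc : ∀ n, 0 ≤ c n) {m : ℕ} {s : ℝ} (hm : (m : ℝ) ≤ s) :
    ∑ n ∈ Finset.range m, c n ≤ rampSum c s := by
  obtain ⟨N, hN⟩ := exists_nat_ge s
  have hmN : m ≤ N := by exact_mod_cast hm.trans hN
  rw [rampSum_eq_sum_range c hN]
  calc ∑ n ∈ Finset.range m, c n = ∑ n ∈ Finset.range m, c n * ramp (s - n) := by
        refine Finset.sum_congr rfl fun n hn => ?_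
        have : (n : ℝ) + 1 ≤ m := by exact_mod_cast Finset.mem_range.1 hn
        rw [ramp_of_one_le (by linarith), mul_one]
    _ ≤ ∑ n ∈ Finset.range N, c n * ramp (s - n) :=
        Finset.sum_le_sum_of_subset_of_nonneg (Finset.range_subset_range.2 hmN)
          fun n _ _ => mul_nonneg (hc n) (ramp_nonneg _)

end rampSum

lemma exists_continuous_monotone_floor_sub_le {v : ℕ → ℝ} (hv : Monotone v) :
    ∃ g : ℝ → ℝ, Continuous g ∧ Monotone g ∧ g 0 = 0 ∧
      ∀ s, 0 ≤ s → v ⌊s⌋₊ - v 0 ≤ g s := by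
  have hc : ∀ n, 0 ≤ v (n + 1) - v n := fun n => sub_nonneg.2 (hv n.le_succ)
  refine ⟨rampSum fun n => v (n + 1) - v n, continuous_rampSum _, monotone_rampSum hc,
    rampSum_zero _, fun s hs => ?_⟩
  rw [← Finset.sum_range_sub]
  exact sum_range_le_rampSum hc (Nat.floor_le hs)

lemma exists_isKPlus_ge (v : ℕ → ℝ) : ∃ μ : ℝ → ℝ, IsKPlus μ ∧ ∀ n : ℕ, v n ≤ μ n := by
  set w : ℕ → ℝ := fun n => ∑ k ∈ Finset.range (n + 1), |v k| + 1
  have hw : Monotone w := monotone_nat_of_le_succ fun n => by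
    simp only [w, Finset.sum_range_succ _ (n + 1)]
    linarith [abs_nonneg (v (n + 1))]
  have hvw : ∀ n, v n ≤ w n := fun n => by
    have := Finset.single_le_sum (fun k _ => abs_nonneg (v k)) (Finset.self_mem_range_succ n)
    linarith [le_abs_self (v n)]
  obtain ⟨g, hg, hgm, hg0, hgw⟩ := exists_continuous_monotone_floor_sub_le hw
  have hw0 : 0 < w 0 := by positivity
  refine ⟨fun r => w 0 + g r, ⟨(continuous_const.add hg).continuousOn, fun r hr => ?_⟩,
    fun n => ?_⟩
  · linarith [hgm hr]
  · have := hgw n n.cast_nonneg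
    rw [Nat.floor_natCast] at this
    linarith [hvw n]

def rampSeries (P : ℕ → ℝ → ℝ) (s : ℝ) : ℝ := ∑' n, ramp (P n s) / 2 ^ n

section rampSeries

variable {P : ℕ → ℝ → ℝ}

lemma ramp_div_pow_nonneg (u : ℝ) (n : ℕ) : 0 ≤ ramp u / 2 ^ n :=
  div_nonneg (ramp_nonneg u) (by positivity)

lemma ramp_div_pow_le (u : ℝ) (n : ℕ) : ramp u / 2 ^ n ≤ (1 / 2) ^ n := by
  rw [one_div_pow]
  exact div_le_div_of_nonneg_right (ramp_le_one u) (by positivity)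

lemma summable_ramp_div_pow (P : ℕ → ℝ → ℝ) (s : ℝ) :
    Summable fun n => ramp (P n s) / 2 ^ n :=
  summable_geometric_two.of_nonneg_of_le (fun n => ramp_div_pow_nonneg _ n)
    fun n => ramp_div_pow_le _ n

lemma rampSeries_nonneg (P : ℕ → ℝ → ℝ) (s : ℝ) : 0 ≤ rampSeries P s :=
  tsum_nonneg fun n => ramp_div_pow_nonneg _ n

lemma ramp_div_pow_le_rampSeries (P : ℕ → ℝ → ℝ) (t : ℕ) (s : ℝ) :
    ramp (P t s) / 2 ^ t ≤ rampSeries P s :=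
  (summable_ramp_div_pow P s).le_tsum t fun n _ => ramp_div_pow_nonneg _ n

lemma continuous_rampSeries (hcont : ∀ n, Continuous (P n)) : Continuous (rampSeries P) :=
  continuous_tsum (fun n => (continuous_ramp.comp (hcont n)).div_const _) summable_geometric_two
    fun n s => by
      rw [Real.norm_of_nonneg (ramp_div_pow_nonneg _ n)]
      exact ramp_div_pow_le _ n

lemma monotone_rampSeries (hmono : ∀ n, Monotone (P n)) : Monotone (rampSeries P) :=
  fun _ _ hxy => (summable_ramp_div_pow P _).tsum_le_tsum
    (fun n => div_le_div_of_nonneg_right (monotone_ramp (hmono n hxy)) (by positivity))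
    (summable_ramp_div_pow P _)

lemma rampSeries_zero (h0 : ∀ n, P n 0 = 0) : rampSeries P 0 = 0 := by
  simp [rampSeries, h0, ramp_of_nonpos le_rfl]

lemma le_mul_rampSeries (hmono : ∀ t, Monotone (P t)) (h0 : ∀ t, P t 0 = 0) {t : ℕ} {s : ℝ}
    (hs0 : 0 ≤ s) (hs1 : s ≤ 1) : P t s ≤ 2 ^ t * (P t 1 + 1) * rampSeries P s := by
  have hterm : ramp (P t s) ≤ rampSeries P s * 2 ^ t :=
    (div_le_iff₀ (by positivity)).1 (ramp_div_pow_le_rampSeries P t s)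
  have hPs : 0 ≤ P t s := h0 t ▸ hmono t hs0
  have hP1 : P t s ≤ P t 1 := hmono t hs1
  have hS := rampSeries_nonneg P s
  have h2t : (0 : ℝ) < 2 ^ t := by positivity
  rcases le_or_gt (P t s) 1 with h | h
  · rw [ramp_of_mem ⟨hPs, h⟩] at hterm
    nlinarith [mul_nonneg (mul_nonneg h2t.le (hPs.trans hP1)) hS]
  · -- then the `t`-th term alone gives `1 ≤ 2 ^ t * rampSeries P s`
    rw [ramp_of_one_le h.le] at hterm
    nlinarith [mul_le_mul_of_nonneg_left hterm (hPs.trans hP1)]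

end rampSeries

section separation

variable {P : ℕ → ℝ → ℝ}

lemma monotone_diag (hmono : ∀ t, Monotone (P t)) (hmono_t : ∀ s, Monotone fun t => P t s) :
    Monotone fun n : ℕ => P n n :=
  fun m n h => (hmono_t m h).trans (hmono n (Nat.cast_le.2 h))

lemma diag_nonneg (hmono : ∀ t, Monotone (P t)) (h0 : ∀ t, P t 0 = 0) (k : ℕ) : 0 ≤ P k k :=
  h0 k ▸ hmono k k.cast_nonneg

lemma le_diag_add_diag (hmono : ∀ t, Monotone (P t)) (hmono_t : ∀ s, Monotone fun t => P t s)
    (h0 : ∀ t, P t 0 = 0) {t n : ℕ} {s : ℝ} (hsn : s ≤ n) : P t s ≤ P t t + P n n := by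
  have hdiag0 := diag_nonneg hmono h0
  calc P t s ≤ P (max t n) s := hmono_t s (le_max_left t n)
    _ ≤ P (max t n) ((max t n : ℕ) : ℝ) :=
        hmono _ (hsn.trans (by exact_mod_cast le_max_right t n))
    _ ≤ P t t + P n n := by
        rcases max_choice t n with h | h <;> rw [h] <;> linarith [hdiag0 t, hdiag0 n]

theorem exists_isKPlus_isKInf_bound (hcont : ∀ t, Continuous (P t))
    (hmono : ∀ t, Monotone (P t)) (hmono_t : ∀ s, Monotone fun t => P t s)
    (h0 : ∀ t, P t 0 = 0) :
    ∃ μ a : ℝ → ℝ, IsKPlus μ ∧ IsKInf a ∧ ∀ (t : ℕ) (s : ℝ), 0 ≤ s → P t s ≤ μ t * a s := by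
  obtain ⟨h, hh, hhm, hh0, hh_ge⟩ := exists_continuous_monotone_floor_sub_le
    (v := fun n : ℕ => P (n + 1) (n + 1 : ℕ))
    fun _ _ hmn => monotone_diag hmono hmono_t (by omega)
  have hh_nonneg : ∀ s, 0 ≤ s → 0 ≤ h s := fun s hs => hh0 ▸ hhm hs
  obtain ⟨μ, hμ, hμ_ge⟩ :=
    exists_isKPlus_ge fun t : ℕ => 2 ^ t * (P t 1 + 1) + (P t t + P 1 1) + 1
  refine ⟨μ, fun s => s + h s + rampSeries P s, hμ, ⟨?_, fun x _ y _ hxy => ?_, ?_, ?_⟩,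
    fun t s hs => ?_⟩
  · exact (continuous_id.add hh |>.add (continuous_rampSeries hcont)).continuousOn
  · linarith [hhm hxy.le, monotone_rampSeries hmono hxy.le]
  · simp [hh0, rampSeries_zero h0]
  · refine tendsto_atTop_mono' _ ?_ tendsto_id
    filter_upwards [eventually_ge_atTop 0] with s hs
    show s ≤ _
    linarith [hh_nonneg s hs, rampSeries_nonneg P s]
  set A := s + h s + rampSeries P s
  have hS := rampSeries_nonneg P s
  have hhs := hh_nonneg s hs
  have hc : 0 ≤ 2 ^ t * (P t 1 + 1) := by
    have : 0 ≤ P t 1 := h0 t ▸ hmono t zero_le_one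
    positivity
  have hc' : 0 ≤ P t t + P 1 1 :=
    add_nonneg (diag_nonneg hmono h0 t) (by simpa using diag_nonneg hmono h0 1)
  refine le_trans ?_ (mul_le_mul_of_nonneg_right (hμ_ge t) (by positivity))
  rcases le_or_gt s 1 with hs1 | hs1
  · have := le_mul_rampSeries hmono h0 (t := t) hs hs1
    nlinarith [mul_le_mul_of_nonneg_left (show rampSeries P s ≤ A by linarith) hc]
  · -- `A ≥ 1` absorbs the constants; the growth in `s` is carried by `h`
    have hceil : P ⌈s⌉₊ ⌈s⌉₊ ≤ P (⌊s⌋₊ + 1) (⌊s⌋₊ + 1 : ℕ) :=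
      monotone_diag hmono hmono_t (Nat.ceil_le_floor_add_one s)
    have := le_diag_add_diag hmono hmono_t h0 (t := t) (Nat.le_ceil s)
    have := hh_ge s hs
    simp only [Nat.cast_add, Nat.cast_one, zero_add] at this hceil
    nlinarith [mul_le_mul_of_nonneg_left (show 1 ≤ A by linarith) hc']

end separation

/-- Bound on the norm at time `t` of a solution started from norm `s` at any time `t₀ ≤ t`: the
maximum with the previous value makes it nondecreasing in `t`, which takes care of every `t₀`. -/
def reachBound (a β : ℝ → ℝ) : ℕ → ℝ → ℝ
  | 0, s => max s 0
  | t + 1, s => max (reachBound a β t s) (a (β t * reachBound a β t s))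

section reachBound

variable {a β : ℝ → ℝ}

lemma reachBound_nonneg (t : ℕ) (s : ℝ) : 0 ≤ reachBound a β t s := by
  induction t with
  | zero => exact le_max_right _ _
  | succ t ih => exact ih.trans (le_max_left _ _)

lemma monotone_reachBound_time (s : ℝ) : Monotone fun t => reachBound a β t s :=
  monotone_nat_of_le_succ fun _ => le_max_left _ _

lemma le_reachBound (t : ℕ) (s : ℝ) : s ≤ reachBound a β t s :=
  (le_max_left _ _).trans (monotone_reachBound_time s t.zero_le)

lemma reachBound_zero_right (ha0 : a 0 = 0) (t : ℕ) : reachBound a β t 0 = 0 := by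
  induction t with
  | zero => simp [reachBound]
  | succ t ih => simp [reachBound, ih, ha0]

lemma monotone_reachBound (hβ : ∀ t : ℕ, 0 ≤ β t) (ha : MonotoneOn a (Ici 0)) (t : ℕ) :
    Monotone (reachBound a β t) := by
  induction t with
  | zero => exact fun x y h => max_le_max h le_rfl
  | succ t ih =>
    refine fun x y hxy =>
      max_le_max (ih hxy) (ha ?_ ?_ (mul_le_mul_of_nonneg_left (ih hxy) (hβ t)))
    · exact mul_nonneg (hβ t) (reachBound_nonneg t x)
    · exact mul_nonneg (hβ t) (reachBound_nonneg t y)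

lemma continuous_reachBound (hβ : ∀ t : ℕ, 0 ≤ β t) (ha : ContinuousOn a (Ici 0)) (t : ℕ) :
    Continuous (reachBound a β t) := by
  induction t with
  | zero => exact continuous_id.max continuous_const
  | succ t ih =>
    exact ih.max (ha.comp_continuous (continuous_const.mul ih)
      fun s => mul_nonneg (hβ t) (reachBound_nonneg t s))

lemma norm_le_reachBound {X D : Type*} [SeminormedAddCommGroup X] {f : ℕ → D → X → X}
    (hβ : ∀ t : ℕ, 0 ≤ β t) (hf : ∀ t d x, ‖f t d x‖ ≤ a (β t * ‖x‖))
    (ha : MonotoneOn a (Ici 0)) {d : ℕ → D} {t₀ : ℕ} {x : ℕ → X}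
    (hx : ∀ t, t₀ ≤ t → x (t + 1) = f t (d t) (x t)) :
    ∀ t, t₀ ≤ t → ‖x t‖ ≤ reachBound a β t ‖x t₀‖ := by
  intro t ht
  induction t, ht using Nat.le_induction with
  | base => exact le_reachBound t₀ _
  | succ t ht ih =>
    rw [hx t ht]
    calc ‖f t (d t) (x t)‖ ≤ a (β t * ‖x t‖) := hf t (d t) (x t)
      _ ≤ a (β t * reachBound a β t ‖x t₀‖) :=
          ha (mul_nonneg (hβ t) (norm_nonneg _)) (mul_nonneg (hβ t) (reachBound_nonneg t _))
            (mul_le_mul_of_nonneg_left ih (hβ t))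
      _ ≤ reachBound a β (t + 1) ‖x t₀‖ := le_max_right _ _

end reachBound

theorem fact_I_general {X D : Type*} [NormedAddCommGroup X]
    (f : ℕ → D → X → X)
    (hH1 : ∃ a β : ℝ → ℝ, IsKInf a ∧ IsKPlus β ∧
      ∀ (t : ℕ) (d : D) (x : X), ‖f t d x‖ ≤ a (β t * ‖x‖)) :
    ∃ μ a : ℝ → ℝ, IsKPlus μ ∧ IsKInf a ∧
      ∀ (d : ℕ → D) (t₀ : ℕ) (x₀ : X) (x : ℕ → X),
        x t₀ = x₀ → (∀ t, t₀ ≤ t → x (t + 1) = f t (d t) (x t)) →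
        ∀ t, t₀ ≤ t → ‖x t‖ ≤ μ t * a ‖x₀‖ := by
  obtain ⟨a₀, β, ⟨ha_cont, ha_mono, ha0, -⟩, hβ, hf⟩ := hH1
  have hβ' : ∀ t : ℕ, 0 ≤ β t := fun t => (hβ.2 t t.cast_nonneg).le
  obtain ⟨μ, a, hμ, ha, hbound⟩ := exists_isKPlus_isKInf_bound
    (continuous_reachBound hβ' ha_cont) (monotone_reachBound hβ' ha_mono.monotoneOn)
    monotone_reachBound_time (reachBound_zero_right ha0)
  refine ⟨μ, a, hμ, ha, fun d t₀ x₀ x hx₀ hx t ht => ?_⟩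
  subst hx₀
  exact (norm_le_reachBound hβ' hf ha_mono.monotoneOn hx t ht).trans
    (hbound t _ (norm_nonneg _))

/-- Fact I: robust forward completeness estimate for system (1.1) under hypothesis (H1). -/
theorem fact_I {X D : Type*} [NormedAddCommGroup X] [NormedSpace ℝ X] [Nonempty D]
    (f : ℕ → D → X → X)
    (hf0 : ∀ (t : ℕ) (d : D), f t d 0 = 0)
    (hH1 : ∃ a β : ℝ → ℝ, IsKInf a ∧ IsKPlus β ∧
      ∀ (t : ℕ) (d : D) (x : X), ‖f t d x‖ ≤ a (β t * ‖x‖)) :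
    ∃ μ a : ℝ → ℝ, IsKPlus μ ∧ IsKInf a ∧
      ∀ (d : ℕ → D) (t₀ : ℕ) (x₀ : X) (x : ℕ → X),
        x t₀ = x₀ → (∀ t, t₀ ≤ t → x (t + 1) = f t (d t) (x t)) →
        ∀ t, t₀ ≤ t → ‖x t‖ ≤ μ t * a ‖x₀‖ :=
  fact_I_general f hH1
end
end

section
/- (H3) implies (H1). Suppose f : ℕ × D × X → X satisfies hypothesis (H3). Then there exist functions ζ ∈ K∞ and β ∈ K⁺ such that ‖f(t,d,x)‖_X ≤ ζ(β(t)‖x‖_X) for all (t,x,d) ∈ ℕ × X × D, i.e. hypothesis (H1) holds. -/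
open Filter Topology Bornology Set

noncomputable section

/-!
Two scales. Equicontinuity at `0` yields radii `δ k ≤ 2⁻ᵏ` with `‖f t d x‖ ≤ 2⁻ᵏ⁻¹` whenever
`t ≤ k` and `‖x‖ < δ k`; the continuous increasing `Φ s = ∑ 2⁻ᵏ min (1, s / δ k)` vanishes at `0`
and has `Φ (δ k) ≥ 2⁻ᵏ`, so it dominates `f` for `‖x‖ < δ t`. For `‖x‖ ≥ δ t` the bounds on balls
are dominated by the primitive `F` of an increasing step function, evaluated at a point of order
`t + ‖x‖`; taking `β t ≥ (t + 3) / δ t` makes `β t * ‖x‖` that large. Then `ζ s = s + Φ s + F s`.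
-/

lemma isKInf_id_add {G : ℝ → ℝ} (hc : Continuous G) (hm : Monotone G) (h0 : G 0 = 0) :
    IsKInf fun s => s + G s := by
  refine ⟨(continuous_id.add hc).continuousOn, (strictMono_id.add_monotone hm).strictMonoOn _,
    by simp [h0], tendsto_atTop_mono' atTop ?_ tendsto_id⟩
  filter_upwards [eventually_ge_atTop 0] with s hs
  have := hm hs
  simp only [h0, id] at this ⊢
  linarith

lemma exists_continuous_monotone_le_succ (C : ℕ → ℝ) :
    ∃ F : ℝ → ℝ, Continuous F ∧ Monotone F ∧ F 0 = 0 ∧ ∀ n : ℕ, C n ≤ F (n + 1) := by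
  set A : ℕ → ℝ := fun n => ∑ k ∈ Finset.range (n + 1), |C k|
  have hA : Monotone A := fun m n h =>
    Finset.sum_le_sum_of_subset_of_nonneg (by gcongr) fun _ _ _ => abs_nonneg _
  have hCA : ∀ n, C n ≤ A n := fun n => (le_abs_self _).trans <|
    Finset.single_le_sum (fun k _ => abs_nonneg (C k)) (Finset.self_mem_range_succ n)
  set g : ℝ → ℝ := fun u => A ⌊u⌋₊
  have hgi : ∀ a b, IntervalIntegrable g MeasureTheory.volume a b := fun _ _ =>
    (hA.comp Nat.floor_mono).intervalIntegrable
  set F : ℝ → ℝ := fun s => ∫ u in 0..s, g u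
  have hF : ∀ a b, F b - F a = ∫ u in a..b, g u := fun a b =>
    intervalIntegral.integral_interval_sub_left (hgi 0 b) (hgi 0 a)
  have hFm : Monotone F := fun a b hab => sub_nonneg.1 <| (hF a b).symm ▸
    intervalIntegral.integral_nonneg hab fun _ _ => Finset.sum_nonneg fun _ _ => abs_nonneg _
  refine ⟨F, intervalIntegral.continuous_primitive hgi 0, hFm, by simp [F], fun n => ?_⟩
  have hstep : A n ≤ F (n + 1) - F n := by
    rw [hF]
    calc A n = ∫ _ in (n : ℝ)..n + 1, A n := by simp
      _ ≤ ∫ u in (n : ℝ)..n + 1, g u :=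
        intervalIntegral.integral_mono_on (by linarith) intervalIntegrable_const (hgi _ _)
          fun u hu => hA (Nat.le_floor hu.1)
  have : F 0 ≤ F n := hFm n.cast_nonneg
  simp only [F, intervalIntegral.integral_same] at this
  linarith [hCA n]

lemma exists_continuous_monotone_pow_le (δ : ℕ → ℝ) (hδ : ∀ k, 0 < δ k) :
    ∃ Φ : ℝ → ℝ, Continuous Φ ∧ Monotone Φ ∧ Φ 0 = 0 ∧ ∀ k, (1 / 2 : ℝ) ^ k ≤ Φ (δ k) := by
  set φ : ℕ → ℝ → ℝ := fun k s => (1 / 2 : ℝ) ^ k * projIcc (0 : ℝ) 1 zero_le_one (s / δ k)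
  have hφ0 : ∀ k s, 0 ≤ φ k s := fun k s => mul_nonneg (by positivity) (projIcc _ _ _ _).2.1
  have hφ1 : ∀ k s, φ k s ≤ (1 / 2) ^ k := fun k s =>
    mul_le_of_le_one_right (by positivity) (projIcc _ _ _ _).2.2
  have hsum : Summable fun k => (1 / 2 : ℝ) ^ k :=
    summable_geometric_of_lt_one (by norm_num) (by norm_num)
  have hφs : ∀ s, Summable (φ · s) := fun s => hsum.of_nonneg_of_le (hφ0 · s) (hφ1 · s)
  refine ⟨fun s => ∑' k, φ k s, continuous_tsum (fun k => ?_) hsum fun k s => ?_,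
    fun a b hab => (hφs a).tsum_le_tsum (fun k => ?_) (hφs b), by simp [φ], fun k => ?_⟩
  · exact continuous_const.mul (continuous_subtype_val.comp
      (continuous_projIcc.comp (continuous_id.div_const _)))
  · rw [Real.norm_of_nonneg (hφ0 k s)]
    exact hφ1 k s
  · exact mul_le_mul_of_nonneg_left (monotone_projIcc _ (div_le_div_of_nonneg_right hab
      (hδ k).le)) (by positivity)
  · calc (1 / 2 : ℝ) ^ k = φ k (δ k) := by simp [φ, div_self (hδ k).ne']
      _ ≤ ∑' j, φ j (δ k) := (hφs _).le_tsum k fun j _ => hφ0 j _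

lemma exists_isKPlus_le (b : ℕ → ℝ) : ∃ β : ℝ → ℝ, IsKPlus β ∧ ∀ t : ℕ, b t ≤ β t := by
  obtain ⟨F, hc, hm, h0, hb⟩ := exists_continuous_monotone_le_succ b
  refine ⟨fun s => 1 + F (s + 1),
    ⟨(continuous_const.add (hc.comp (continuous_add_const 1))).continuousOn, fun s hs => ?_⟩,
    fun t => by linarith [hb t]⟩
  have := hm (show (0 : ℝ) ≤ s + 1 by linarith)
  linarith

lemma exists_le_succ_le_lt {δ : ℕ → ℝ} (hδ : Tendsto δ atTop (𝓝 0)) {r : ℝ} (hr0 : 0 < r)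
    {t : ℕ} (hr : r < δ t) : ∃ k, t ≤ k ∧ δ (k + 1) ≤ r ∧ r < δ k := by
  obtain ⟨n, hn, htn⟩ := ((hδ.eventually (gt_mem_nhds hr0)).and (eventually_ge_atTop t)).exists
  obtain ⟨m, hm, hm1⟩ := Nat.exists_not_and_succ_of_not_zero_of_exists
    (p := fun m => δ (t + m) ≤ r) (by simpa using hr) ⟨n - t, by simpa [htn] using hn.le⟩
  exact ⟨t + m, Nat.le_add_right t m, hm1, not_le.1 hm⟩

lemma natCast_add_ceil_add_one_le {t : ℕ} {δ r B : ℝ} (hδ : 0 < δ) (hδ1 : δ ≤ 1) (hr : δ ≤ r)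
    (hB : (t + 3) / δ ≤ B) : ((t + ⌈r⌉₊ : ℕ) : ℝ) + 1 ≤ B * r := by
  have hr0 : 0 < r := hδ.trans_le hr
  have hceil : (⌈r⌉₊ : ℝ) < r + 1 := Nat.ceil_lt_add_one hr0.le
  have hrδ : 1 ≤ r / δ := (one_le_div hδ).2 hr
  have hrδ' : r ≤ r / δ := le_div_self hr0.le hδ hδ1
  have hBr : (t + 3) * (r / δ) ≤ B * r := by
    rw [← mul_div_assoc, ← div_mul_eq_mul_div]
    exact mul_le_mul_of_nonneg_right hB hr0.le
  push_cast
  nlinarith [t.cast_nonneg (α := ℝ)]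

theorem exists_isKInf_isKPlus_le {ι : Type*} (g : ℕ → ι → ℝ) (ρ : ι → ℝ) (hρ : ∀ i, 0 ≤ ρ i)
    (hbdd : ∀ n : ℕ, ∃ C, ∀ t ≤ n, ∀ i, ρ i ≤ n → g t i ≤ C)
    (hsmall : ∀ (T : ℕ) (ε : ℝ), 0 < ε → ∃ δ > 0, ∀ t ≤ T, ∀ i, ρ i < δ → g t i ≤ ε) :
    ∃ ζ β : ℝ → ℝ, IsKInf ζ ∧ IsKPlus β ∧ ∀ t i, g t i ≤ ζ (β t * ρ i) := by
  choose C hC using hbdd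
  choose δ₀ hδ₀ hgδ₀ using fun k : ℕ => hsmall k ((1 / 2) ^ (k + 1)) (by positivity)
  set δ : ℕ → ℝ := fun k => min (δ₀ k) ((1 / 2) ^ k)
  have hδ : ∀ k, 0 < δ k := fun k => lt_min (hδ₀ k) (by positivity)
  have hδ1 : ∀ k, δ k ≤ 1 := fun k =>
    (min_le_right _ _).trans (pow_le_one₀ (by norm_num) (by norm_num))
  have hδ_lim : Tendsto δ atTop (𝓝 0) := squeeze_zero (fun k => (hδ k).le)
    (fun k => min_le_right _ _) (tendsto_pow_atTop_nhds_zero_of_lt_one (by norm_num) (by norm_num))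
  obtain ⟨F, hFc, hFm, hF0, hCF⟩ := exists_continuous_monotone_le_succ C
  obtain ⟨Φ, hΦc, hΦm, hΦ0, hΦδ⟩ := exists_continuous_monotone_pow_le δ hδ
  obtain ⟨β, hβ, hβδ⟩ := exists_isKPlus_le fun t => (t + 3) / δ t
  have hβ1 : ∀ t : ℕ, 1 ≤ β t := fun t => le_trans (by
    rw [one_le_div (hδ t)]; linarith [hδ1 t, t.cast_nonneg (α := ℝ)]) (hβδ t)
  have hζ : ∀ s, 0 ≤ s → Φ s ≤ s + (Φ s + F s) ∧ F s ≤ s + (Φ s + F s) := fun s hs => by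
    have := hΦm hs; have := hFm hs; constructor <;> linarith
  refine ⟨fun s => s + (Φ s + F s), β,
    isKInf_id_add (hΦc.add hFc) (hΦm.add hFm) (by simp [hΦ0, hF0]), hβ, fun t i => ?_⟩
  set r := ρ i
  have hβr : r ≤ β t * r := le_mul_of_one_le_left (hρ i) (hβ1 t)
  rcases (hρ i).eq_or_lt with hr0 | hr0
  · have hg : g t i ≤ 0 := le_of_forall_pos_le_add fun ε hε => by
      obtain ⟨δ', hδ', hg⟩ := hsmall t ε hε
      simpa using hg t le_rfl i (hr0 ▸ hδ')
    simpa [show r = 0 from hr0.symm, hΦ0, hF0] using hg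
  rcases lt_or_ge r (δ t) with hr | hr
  · obtain ⟨k, htk, hk1, hk⟩ := exists_le_succ_le_lt hδ_lim hr0 hr
    calc g t i ≤ (1 / 2) ^ (k + 1) := hgδ₀ k t htk i (hk.trans_le (min_le_left _ _))
      _ ≤ Φ (β t * r) := (hΦδ _).trans (hΦm (hk1.trans hβr))
      _ ≤ _ := (hζ _ (hr0.le.trans hβr)).1
  · calc g t i ≤ C (t + ⌈r⌉₊) := hC _ t (Nat.le_add_right _ _) i <| by
          push_cast; linarith [Nat.le_ceil r, t.cast_nonneg (α := ℝ)]
      _ ≤ F (β t * r) := (hCF _).trans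
          (hFm (natCast_add_ceil_add_one_le (hδ t) (hδ1 t) hr (hβδ t)))
      _ ≤ _ := (hζ _ (hr0.le.trans hβr)).2

theorem h3_implies_h1_general {X D : Type*} [NormedAddCommGroup X]
    (f : ℕ → D → X → X)
    (hf0 : ∀ (t : ℕ) (d : D), f t d 0 = 0)
    (hH3 : ∀ (T : ℕ) (S : Set X), Bornology.IsBounded S → ∀ ε > (0 : ℝ),
      Bornology.IsBounded {y : X | ∃ t ≤ T, ∃ d : D, ∃ x ∈ S, y = f t d x} ∧
      ∃ δ > (0 : ℝ), ∀ t ≤ T, ∀ x ∈ S, ∀ x₀ ∈ S, ‖x - x₀‖ < δ →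
        ∀ d : D, ‖f t d x - f t d x₀‖ < ε) :
    ∃ ζ β : ℝ → ℝ, IsKInf ζ ∧ IsKPlus β ∧
      ∀ (t : ℕ) (d : D) (x : X), ‖f t d x‖ ≤ ζ (β t * ‖x‖) := by
  have hbdd : ∀ n : ℕ, ∃ C, ∀ t ≤ n, ∀ p : D × X, ‖p.2‖ ≤ n → ‖f t p.1 p.2‖ ≤ C := by
    intro n
    obtain ⟨C, hC⟩ := isBounded_iff_forall_norm_le.1
      (hH3 n (Metric.closedBall 0 n) Metric.isBounded_closedBall 1 one_pos).1
    exact ⟨C, fun t ht p hp => hC _ ⟨t, ht, p.1, p.2, by simpa using hp, rfl⟩⟩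
  have hsmall : ∀ (T : ℕ) (ε : ℝ), 0 < ε →
      ∃ δ > 0, ∀ t ≤ T, ∀ p : D × X, ‖p.2‖ < δ → ‖f t p.1 p.2‖ ≤ ε := by
    intro T ε hε
    obtain ⟨-, δ, hδ, hcont⟩ := hH3 T (Metric.closedBall 0 1) Metric.isBounded_closedBall ε hε
    refine ⟨min δ 1, by positivity, fun t ht p hp => ?_⟩
    have := hcont t ht p.2 (by simpa using hp.le.trans (min_le_right _ _)) 0 (by simp)
      (by simpa using hp.trans_le (min_le_left _ _)) p.1
    simpa [hf0] using this.le
  obtain ⟨ζ, β, hζ, hβ, hle⟩ := exists_isKInf_isKPlus_le (fun t (p : D × X) => ‖f t p.1 p.2‖)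
    (fun p => ‖p.2‖) (fun _ => norm_nonneg _) hbdd hsmall
  exact ⟨ζ, β, hζ, hβ, fun t d x => hle t (d, x)⟩

/-- Hypothesis (H3) implies hypothesis (H1). -/
theorem h3_implies_h1 {X D : Type*} [NormedAddCommGroup X] [NormedSpace ℝ X] [Nonempty D]
    (f : ℕ → D → X → X)
    (hf0 : ∀ (t : ℕ) (d : D), f t d 0 = 0)
    (hH3 : ∀ (T : ℕ) (S : Set X), Bornology.IsBounded S → ∀ ε > (0 : ℝ),
      Bornology.IsBounded {y : X | ∃ t ≤ T, ∃ d : D, ∃ x ∈ S, y = f t d x} ∧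
      ∃ δ > (0 : ℝ), ∀ t ≤ T, ∀ x ∈ S, ∀ x₀ ∈ S, ‖x - x₀‖ < δ →
        ∀ d : D, ‖f t d x - f t d x₀‖ < ε) :
    ∃ ζ β : ℝ → ℝ, IsKInf ζ ∧ IsKPlus β ∧
      ∀ (t : ℕ) (d : D) (x : X), ‖f t d x‖ ≤ ζ (β t * ‖x‖) :=
  h3_implies_h1_general f hf0 hH3
end
end

section
/- Proposition 2.2, (iii) ⇒ (i) (Lyapunov sufficiency for RGAOS). Suppose system (1.1) satisfies hypotheses (H1) and (H2), and suppose there exist a function V : ℕ × X → [0,∞), functions a₁, a₂, a₃ ∈ K∞ with a₃(s) ≤ s for all s ≥ 0, a function β ∈ K⁺ and a continuous function q : [0,∞) → [0,∞) with q(t) → 0 as t → ∞, such that: a₁(‖H(t,x)‖_Y) ≤ V(t,x) ≤ a₂(β(t)‖x‖_X) for all (t,x) ∈ ℕ × X, and V(t+1, f(t,d,x)) ≤ V(t,x) − a₃(V(t,x)) + q(t) for all (t,x,d) ∈ ℕ × X × D. Then system (1.1) is non-uniformly in time RGAOS. -/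
open Filter Topology Bornology Set

noncomputable section

/-!
Along a solution, `v t = V t (x t)` satisfies `v (t + 1) ≤ v t - a₃ (v t) + q t` with `q t → 0`.
As `a₃` is unbounded and `q` bounded, `v` never exceeds `max (v t₀) R` for a fixed `R`; once `q`
is small compared with `a₃ (ε / 2)`, `v` loses a fixed amount per step until it is below `ε`, and
then stays there. With `β' = max 1 β`, this gives attractivity, uniform over solutions with
`β' t₀ * ‖x₀‖` bounded, and, with (H1) controlling the finitely many steps before `q` becomes
small, uniform stability. Through `a₁` the same holds for `‖H t (x t)‖`. The supremum of these
values over all solutions with `β' t₀ * ‖x₀‖ ≤ s` and `t - t₀ ≥ τ` is nondecreasing in `s`,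
nonincreasing in `τ`, tends to `0` as `τ → ∞` and, uniformly in `τ`, as `s → 0`; averaging it
over `[s, 2s] × [τ - 1, τ]` and adding `s * exp (-τ)` gives the `KL` bound.
-/

open MeasureTheory intervalIntegral

namespace IsKInf

variable {a : ℝ → ℝ}

lemma nonneg (ha : IsKInf a) {z : ℝ} (hz : 0 ≤ z) : 0 ≤ a z :=
  ha.2.2.1 ▸ ha.2.1.monotoneOn self_mem_Ici hz hz

lemma pos (ha : IsKInf a) {z : ℝ} (hz : 0 < z) : 0 < a z :=
  ha.2.2.1 ▸ ha.2.1 self_mem_Ici hz.le hz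

lemma apply_le_apply (ha : IsKInf a) {z w : ℝ} (hz : 0 ≤ z) (h : z ≤ w) : a z ≤ a w :=
  ha.2.1.monotoneOn hz (hz.trans h) h

lemma le_of_apply_le (ha : IsKInf a) {z w : ℝ} (hz : 0 ≤ z) (hw : 0 ≤ w) (h : a z ≤ a w) :
    z ≤ w :=
  (ha.2.1.le_iff_le hz hw).1 h

lemma exists_forall_le_of_apply_le (ha : IsKInf a) (R : ℝ) :
    ∃ B, ∀ z, 0 ≤ z → a z ≤ R → z ≤ B := by
  obtain ⟨B, hRB, hB⟩ := ((ha.2.2.2.eventually_ge_atTop R).and (eventually_ge_atTop 0)).exists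
  exact ⟨B, fun z hz h => ha.le_of_apply_le hz hB (h.trans hRB)⟩

lemma exists_pos_apply_mul_le (ha : IsKInf a) {b η : ℝ} (hb : 0 ≤ b) (hη : 0 < η) :
    ∃ δ > 0, a (b * δ) ≤ η := by
  have hcont : Tendsto (fun r => a (b * r)) (𝓝[>] 0) (𝓝 0) := by
    have ha0 := (ha.1 0 self_mem_Ici).tendsto
    rw [ha.2.2.1] at ha0
    refine ha0.comp (tendsto_nhdsWithin_of_tendsto_nhds_of_eventually_within _ ?_ ?_)
    · simpa using ((continuous_const_mul b).tendsto 0).mono_left nhdsWithin_le_nhds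
    · exact eventually_nhdsWithin_of_forall fun r hr => mul_nonneg hb (le_of_lt hr)
  obtain ⟨δ, hδη, hδ⟩ := ((hcont.eventually_le_const hη).and self_mem_nhdsWithin).exists
  exact ⟨δ, hδ, hδη⟩

end IsKInf

section KLMajorant

variable {g : ℝ → ℝ → ℝ}

def timeAvg (g : ℝ → ℝ → ℝ) (x τ : ℝ) : ℝ := ∫ w in (τ - 1)..τ, g x w

/-- The mean of `g` over `[s, 2 s] × [τ - 1, τ]`, written over `v ∈ [1, 2]` so that it makes sense
at `s = 0`. For `g` monotone in `s` and antitone in `τ` it lies between `g s τ` and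
`g (2 s) (τ - 1)`, and it is continuous where `s > 0`. -/
def doubleAvg (g : ℝ → ℝ → ℝ) (s τ : ℝ) : ℝ := ∫ v in (1 : ℝ)..2, timeAvg g (s * v) τ

lemma timeAvg_nonneg (hg0 : ∀ s u, 0 ≤ g s u) (x τ : ℝ) : 0 ≤ timeAvg g x τ :=
  integral_nonneg (by linarith) fun w _ => hg0 x w

lemma timeAvg_mono (hgs : ∀ u, Monotone (g · u)) (hgu : ∀ s, Antitone (g s)) (τ : ℝ) :
    Monotone (timeAvg g · τ) := fun _ _ h =>
  integral_mono_on (by linarith) (hgu _).intervalIntegrable (hgu _).intervalIntegrable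
    fun w _ => hgs w h

lemma timeAvg_antitone (hgu : ∀ s, Antitone (g s)) (x : ℝ) : Antitone (timeAvg g x) := by
  intro τ₁ τ₂ h
  have hshift : timeAvg g x τ₂ = ∫ w in (τ₁ - 1)..τ₁, g x (w + (τ₂ - τ₁)) := by
    rw [integral_comp_add_right (g x), timeAvg]
    congr 1 <;> ring
  rw [hshift]
  have hanti : Antitone fun w => g x (w + (τ₂ - τ₁)) := fun _ _ huv => hgu x (by linarith)
  exact integral_mono_on (by linarith) hanti.intervalIntegrable (hgu x).intervalIntegrable
    fun w _ => hgu x (by linarith)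

lemma le_timeAvg (hgu : ∀ s, Antitone (g s)) (x τ : ℝ) : g x τ ≤ timeAvg g x τ :=
  calc g x τ = ∫ _ in (τ - 1)..τ, g x τ := by simp
    _ ≤ timeAvg g x τ := integral_mono_on (by linarith) intervalIntegrable_const
        (hgu x).intervalIntegrable fun _ hw => hgu x hw.2

lemma timeAvg_le (hgu : ∀ s, Antitone (g s)) (x τ : ℝ) : timeAvg g x τ ≤ g x (τ - 1) :=
  calc timeAvg g x τ ≤ ∫ _ in (τ - 1)..τ, g x (τ - 1) :=
        integral_mono_on (by linarith) (hgu x).intervalIntegrable intervalIntegrable_const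
          fun _ hw => hgu x hw.1
    _ = g x (τ - 1) := by simp

lemma abs_timeAvg_sub_le (hg0 : ∀ s u, 0 ≤ g s u) (hgu : ∀ s, Antitone (g s)) {x c τ τ' : ℝ}
    (hc : c ≤ τ - 1) (hc' : c ≤ τ' - 1) :
    |timeAvg g x τ - timeAvg g x τ'| ≤ 2 * g x c * |τ - τ'| := by
  have hint : ∀ a b, IntervalIntegrable (g x) volume a b := fun _ _ => (hgu x).intervalIntegrable
  have hpiece : ∀ a b, c ≤ min a b → ‖∫ w in a..b, g x w‖ ≤ g x c * |b - a| := fun a b hab =>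
    norm_integral_le_of_norm_le_const fun w hw => by
      rw [Real.norm_of_nonneg (hg0 x w)]
      exact hgu x (hab.trans hw.1.le)
  rw [timeAvg, timeAvg, integral_interval_sub_interval_comm (hint _ _) (hint _ _) (hint _ _)]
  calc _ ≤ ‖∫ w in (τ - 1)..(τ' - 1), g x w‖ + ‖∫ w in τ..τ', g x w‖ := abs_sub _ _
    _ ≤ g x c * |τ' - 1 - (τ - 1)| + g x c * |τ' - τ| :=
        add_le_add (hpiece _ _ (le_min hc hc')) (hpiece _ _ (le_min (by linarith) (by linarith)))
    _ = 2 * g x c * |τ - τ'| := by rw [sub_sub_sub_cancel_right, abs_sub_comm]; ring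

lemma intervalIntegrable_timeAvg_mul (hgs : ∀ u, Monotone (g · u)) (hgu : ∀ s, Antitone (g s))
    {s : ℝ} (hs : 0 ≤ s) (τ : ℝ) :
    IntervalIntegrable (fun v => timeAvg g (s * v) τ) volume 1 2 :=
  ((timeAvg_mono hgs hgu τ).comp (monotone_mul_left_of_nonneg hs)).intervalIntegrable

lemma doubleAvg_nonneg (hg0 : ∀ s u, 0 ≤ g s u) (s τ : ℝ) : 0 ≤ doubleAvg g s τ :=
  integral_nonneg (by norm_num) fun _ _ => timeAvg_nonneg hg0 _ _

lemma doubleAvg_monotoneOn (hgs : ∀ u, Monotone (g · u)) (hgu : ∀ s, Antitone (g s)) (τ : ℝ) :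
    MonotoneOn (doubleAvg g · τ) (Ici 0) := fun _ hs₁ _ hs₂ h =>
  integral_mono_on (by norm_num) (intervalIntegrable_timeAvg_mul hgs hgu hs₁ τ)
    (intervalIntegrable_timeAvg_mul hgs hgu hs₂ τ)
    fun _ hv => timeAvg_mono hgs hgu τ (mul_le_mul_of_nonneg_right h (by linarith [hv.1]))

lemma doubleAvg_antitone (hgs : ∀ u, Monotone (g · u)) (hgu : ∀ s, Antitone (g s)) {s : ℝ}
    (hs : 0 ≤ s) : Antitone (doubleAvg g s) := fun τ₁ τ₂ h =>
  integral_mono_on (by norm_num) (intervalIntegrable_timeAvg_mul hgs hgu hs τ₂)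
    (intervalIntegrable_timeAvg_mul hgs hgu hs τ₁) fun _ _ => timeAvg_antitone hgu _ h

lemma le_doubleAvg (hgs : ∀ u, Monotone (g · u)) (hgu : ∀ s, Antitone (g s)) {s : ℝ}
    (hs : 0 ≤ s) (τ : ℝ) : g s τ ≤ doubleAvg g s τ :=
  calc g s τ = ∫ _ in (1 : ℝ)..2, g s τ := by norm_num
    _ ≤ doubleAvg g s τ := integral_mono_on (by norm_num) intervalIntegrable_const
        (intervalIntegrable_timeAvg_mul hgs hgu hs τ)
        fun _ hv => (hgs τ (le_mul_of_one_le_right hs hv.1)).trans (le_timeAvg hgu _ _)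

lemma doubleAvg_le (hgs : ∀ u, Monotone (g · u)) (hgu : ∀ s, Antitone (g s)) {s : ℝ}
    (hs : 0 ≤ s) (τ : ℝ) : doubleAvg g s τ ≤ g (2 * s) (τ - 1) :=
  calc doubleAvg g s τ ≤ ∫ _ in (1 : ℝ)..2, g (2 * s) (τ - 1) :=
        integral_mono_on (by norm_num) (intervalIntegrable_timeAvg_mul hgs hgu hs τ)
          intervalIntegrable_const fun _ hv =>
            (timeAvg_le hgu _ _).trans (hgs _ (by nlinarith [hv.2]))
    _ = g (2 * s) (τ - 1) := by norm_num

lemma abs_doubleAvg_sub_le (hg0 : ∀ s u, 0 ≤ g s u) (hgs : ∀ u, Monotone (g · u))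
    (hgu : ∀ s, Antitone (g s)) {s c τ τ' : ℝ} (hs : 0 ≤ s) (hc : c ≤ τ - 1) (hc' : c ≤ τ' - 1) :
    |doubleAvg g s τ - doubleAvg g s τ'| ≤ 2 * g (2 * s) c * |τ - τ'| := by
  rw [doubleAvg, doubleAvg, ← integral_sub (intervalIntegrable_timeAvg_mul hgs hgu hs τ)
    (intervalIntegrable_timeAvg_mul hgs hgu hs τ')]
  have := norm_integral_le_of_norm_le_const (a := 1) (b := 2) (C := 2 * g (2 * s) c * |τ - τ'|)
    (f := fun v => timeAvg g (s * v) τ - timeAvg g (s * v) τ') fun v hv => by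
      rw [uIoc_of_le one_le_two] at hv
      refine (abs_timeAvg_sub_le hg0 hgu hc hc').trans ?_
      gcongr
      exact hgs c (by nlinarith [hv.2])
  norm_num at this
  exact this

lemma doubleAvg_eq_inv_mul_integral {s : ℝ} (hs : s ≠ 0) (τ : ℝ) :
    doubleAvg g s τ = s⁻¹ * ∫ x in s..(2 * s), timeAvg g x τ := by
  rw [doubleAvg, integral_comp_mul_left (timeAvg g · τ) hs, smul_eq_mul, mul_one, mul_comm s 2]

lemma continuousOn_doubleAvg_left (hgs : ∀ u, Monotone (g · u)) (hgu : ∀ s, Antitone (g s))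
    (τ : ℝ) : ContinuousOn (doubleAvg g · τ) (Ioi 0) := by
  have hint : ∀ a b, IntervalIntegrable (timeAvg g · τ) volume a b := fun _ _ =>
    (timeAvg_mono hgs hgu τ).intervalIntegrable
  have hprim : Continuous fun y => ∫ x in (0 : ℝ)..y, timeAvg g x τ :=
    continuous_primitive hint 0
  refine ContinuousOn.congr (f := fun s => s⁻¹ * ((∫ x in (0 : ℝ)..(2 * s), timeAvg g x τ) -
    ∫ x in (0 : ℝ)..s, timeAvg g x τ)) ?_ fun s hs => ?_
  · exact (continuousOn_inv₀.mono fun s hs => ne_of_gt hs).mul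
      ((hprim.comp (continuous_const_mul 2)).sub hprim).continuousOn
  · dsimp only
    rw [doubleAvg_eq_inv_mul_integral (ne_of_gt hs), integral_interval_sub_left (hint _ _)
      (hint _ _)]

lemma continuousAt_doubleAvg (hg0 : ∀ s u, 0 ≤ g s u) (hgs : ∀ u, Monotone (g · u))
    (hgu : ∀ s, Antitone (g s)) {s₀ : ℝ} (hs₀ : 0 < s₀) (τ₀ : ℝ) :
    ContinuousAt (fun p : ℝ × ℝ => doubleAvg g p.1 p.2) (s₀, τ₀) := by
  have hK : 0 ≤ 2 * g (4 * s₀) (τ₀ - 2) := mul_nonneg zero_le_two (hg0 _ _)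
  have hlip : ∀ s ∈ Ioo 0 (2 * s₀), LipschitzOnWith (2 * g (4 * s₀) (τ₀ - 2)).toNNReal
      (doubleAvg g s) (Ioi (τ₀ - 1)) := fun s hs =>
    LipschitzOnWith.of_dist_le_mul fun τ hτ τ' hτ' => by
      rw [Real.dist_eq, Real.dist_eq, Real.coe_toNNReal _ hK]
      refine (abs_doubleAvg_sub_le hg0 hgs hgu hs.1.le (c := τ₀ - 2) ?_ ?_).trans ?_
      · linarith [mem_Ioi.1 hτ]
      · linarith [mem_Ioi.1 hτ']
      · gcongr
        exact hgs _ (by linarith [hs.2])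
  exact (continuousOn_prod_of_continuousOn_lipschitzOnWith' _ _ hlip fun τ _ =>
    (continuousOn_doubleAvg_left hgs hgu τ).mono Ioo_subset_Ioi_self).continuousAt
      (prod_mem_nhds (Ioo_mem_nhds hs₀ (by linarith)) (Ioi_mem_nhds (by linarith)))

lemma doubleAvg_le_of_small (hgs : ∀ u, Monotone (g · u)) (hgu : ∀ s, Antitone (g s))
    {ε δ : ℝ} (hsmall : ∀ s ≤ δ, ∀ u, g s u ≤ ε) {s : ℝ} (hs : 0 ≤ s) (hsδ : 2 * s ≤ δ) (τ : ℝ) :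
    doubleAvg g s τ ≤ ε :=
  (doubleAvg_le hgs hgu hs τ).trans (hsmall _ hsδ _)

lemma doubleAvg_zero_left (hg0 : ∀ s u, 0 ≤ g s u) (hgs : ∀ u, Monotone (g · u))
    (hgu : ∀ s, Antitone (g s)) (hsmall : ∀ ε > 0, ∃ δ > 0, ∀ s ≤ δ, ∀ u, g s u ≤ ε) (τ : ℝ) :
    doubleAvg g 0 τ = 0 := by
  refine le_antisymm (le_of_forall_pos_le_add fun ε hε => ?_) (doubleAvg_nonneg hg0 0 τ)
  obtain ⟨δ, hδ, hsmallδ⟩ := hsmall ε hε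
  rw [zero_add]
  exact doubleAvg_le_of_small hgs hgu hsmallδ le_rfl (by linarith) τ

lemma continuousWithinAt_doubleAvg_zero (hg0 : ∀ s u, 0 ≤ g s u) (hgs : ∀ u, Monotone (g · u))
    (hgu : ∀ s, Antitone (g s)) (hsmall : ∀ ε > 0, ∃ δ > 0, ∀ s ≤ δ, ∀ u, g s u ≤ ε) (τ₀ : ℝ) :
    ContinuousWithinAt (fun p : ℝ × ℝ => doubleAvg g p.1 p.2) (Ici 0 ×ˢ Ici 0) (0, τ₀) := by
  rw [Metric.continuousWithinAt_iff]
  intro ε hε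
  obtain ⟨δ, hδ, hsmallδ⟩ := hsmall (ε / 2) (half_pos hε)
  refine ⟨δ / 2, half_pos hδ, fun {p} hp hpdist => ?_⟩
  have hp1 : p.1 < δ / 2 := by
    have := (le_max_left _ _).trans_lt (Prod.dist_eq.symm.trans_lt hpdist)
    rw [Real.dist_eq, sub_zero] at this
    exact (le_abs_self _).trans_lt this
  rw [doubleAvg_zero_left hg0 hgs hgu hsmall, Real.dist_eq, sub_zero,
    abs_of_nonneg (doubleAvg_nonneg hg0 _ _)]
  exact (doubleAvg_le_of_small hgs hgu hsmallδ hp.1 (by linarith) p.2).trans_lt (half_lt_self hε)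

def klMajorant (g : ℝ → ℝ → ℝ) (s τ : ℝ) : ℝ := s * Real.exp (-τ) + doubleAvg g s τ

theorem isKL_klMajorant (hg0 : ∀ s u, 0 ≤ g s u) (hgs : ∀ u, Monotone (g · u))
    (hgu : ∀ s, Antitone (g s)) (hlim : ∀ s, Tendsto (g s) atTop (𝓝 0))
    (hsmall : ∀ ε > 0, ∃ δ > 0, ∀ s ≤ δ, ∀ u, g s u ≤ ε) : IsKL (klMajorant g) := by
  refine ⟨?_, fun τ _ => ⟨fun s₁ hs₁ s₂ hs₂ h => ?_, ?_⟩, fun s hs => ⟨fun τ₁ _ τ₂ _ h => ?_, ?_⟩⟩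
  · have hexp : Continuous fun p : ℝ × ℝ => p.1 * Real.exp (-p.2) := by fun_prop
    refine hexp.continuousOn.add fun p hp => ?_
    obtain ⟨s, τ⟩ := p
    rcases (mem_Ici.1 hp.1).eq_or_lt with rfl | hs
    · exact continuousWithinAt_doubleAvg_zero hg0 hgs hgu hsmall τ
    · exact (continuousAt_doubleAvg hg0 hgs hgu hs τ).continuousWithinAt
  · exact add_lt_add_of_lt_of_le (mul_lt_mul_of_pos_right h (Real.exp_pos _))
      (doubleAvg_monotoneOn hgs hgu τ hs₁ hs₂ h.le)
  · simp [klMajorant, doubleAvg_zero_left hg0 hgs hgu hsmall]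
  · exact add_le_add (mul_le_mul_of_nonneg_left (Real.exp_le_exp.2 (neg_le_neg h)) hs)
      (doubleAvg_antitone hgs hgu hs h)
  · have hdecay : Tendsto (fun τ => s * Real.exp (-τ)) atTop (𝓝 0) := by
      simpa using Real.tendsto_exp_neg_atTop_nhds_zero.const_mul s
    have hshift : Tendsto (fun τ : ℝ => g (2 * s) (τ - 1)) atTop (𝓝 0) :=
      (hlim (2 * s)).comp (tendsto_atTop_add_const_right _ (-1) tendsto_id)
    have havg : Tendsto (doubleAvg g s) atTop (𝓝 0) :=
      tendsto_of_tendsto_of_tendsto_of_le_of_le tendsto_const_nhds hshift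
        (doubleAvg_nonneg hg0 s) (doubleAvg_le hgs hgu hs)
    simpa [klMajorant] using hdecay.add havg

lemma le_klMajorant (hgs : ∀ u, Monotone (g · u)) (hgu : ∀ s, Antitone (g s)) {s : ℝ}
    (hs : 0 ≤ s) (τ : ℝ) : g s τ ≤ klMajorant g s τ :=
  (le_doubleAvg hgs hgu hs τ).trans (le_add_of_nonneg_left (by positivity))

end KLMajorant

section Envelope

variable {ι : Type*} {s u y : ι → ℝ}

def supEnvelope (s u y : ι → ℝ) (S U : ℝ) : ℝ :=
  sSup (insert 0 (y '' {i | s i ≤ S ∧ U ≤ u i}))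

lemma bddAbove_envelopeSet (hbdd : ∀ S, ∃ B, ∀ i, s i ≤ S → y i ≤ B) (S U : ℝ) :
    BddAbove (insert 0 (y '' {i | s i ≤ S ∧ U ≤ u i})) := by
  obtain ⟨B, hB⟩ := hbdd S
  exact bddAbove_insert.2 ⟨B, forall_mem_image.2 fun i hi => hB i hi.1⟩

lemma supEnvelope_nonneg (hbdd : ∀ S, ∃ B, ∀ i, s i ≤ S → y i ≤ B) (S U : ℝ) :
    0 ≤ supEnvelope s u y S U :=
  le_csSup (bddAbove_envelopeSet hbdd S U) (mem_insert _ _)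

lemma le_supEnvelope (hbdd : ∀ S, ∃ B, ∀ i, s i ≤ S → y i ≤ B) (i : ι) :
    y i ≤ supEnvelope s u y (s i) (u i) :=
  le_csSup (bddAbove_envelopeSet hbdd _ _) (mem_insert_of_mem _ ⟨i, ⟨le_rfl, le_rfl⟩, rfl⟩)

lemma supEnvelope_le {S U ε : ℝ} (hε : 0 ≤ ε) (h : ∀ i, s i ≤ S → U ≤ u i → y i ≤ ε) :
    supEnvelope s u y S U ≤ ε :=
  csSup_le (insert_nonempty _ _) (forall_mem_insert.2 ⟨hε, forall_mem_image.2 fun i hi =>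
    h i hi.1 hi.2⟩)

lemma supEnvelope_mono_left (hbdd : ∀ S, ∃ B, ∀ i, s i ≤ S → y i ≤ B) (U : ℝ) :
    Monotone (supEnvelope s u y · U) := fun _ S₂ h =>
  csSup_le_csSup (bddAbove_envelopeSet hbdd S₂ U) (insert_nonempty _ _)
    (insert_subset_insert (image_mono fun _ hi => ⟨hi.1.trans h, hi.2⟩))

lemma supEnvelope_antitone_right (hbdd : ∀ S, ∃ B, ∀ i, s i ≤ S → y i ≤ B) (S : ℝ) :
    Antitone (supEnvelope s u y S) := fun U₁ _ h =>
  csSup_le_csSup (bddAbove_envelopeSet hbdd S U₁) (insert_nonempty _ _)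
    (insert_subset_insert (image_mono fun _ hi => ⟨hi.1, h.trans hi.2⟩))

theorem exists_isKL_bound (hs : ∀ i, 0 ≤ s i) (hbdd : ∀ S, ∃ B, ∀ i, s i ≤ S → y i ≤ B)
    (hattr : ∀ S, ∀ ε > 0, ∃ U, ∀ i, s i ≤ S → U ≤ u i → y i ≤ ε)
    (hstab : ∀ ε > 0, ∃ δ > 0, ∀ i, s i ≤ δ → y i ≤ ε) :
    ∃ σ, IsKL σ ∧ ∀ i, y i ≤ σ (s i) (u i) := by
  have hlim : ∀ S, Tendsto (supEnvelope s u y S) atTop (𝓝 0) := fun S =>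
    tendsto_order.2 ⟨fun _ ha => .of_forall fun _ => ha.trans_le (supEnvelope_nonneg hbdd _ _),
      fun ε hε => by
        obtain ⟨U, hU⟩ := hattr S (ε / 2) (half_pos hε)
        exact eventually_atTop.2 ⟨U, fun U' hU' => (supEnvelope_le (half_pos hε).le
          fun i hsi hui => hU i hsi (hU'.trans hui)).trans_lt (half_lt_self hε)⟩⟩
  have hsmall : ∀ ε > 0, ∃ δ > 0, ∀ S ≤ δ, ∀ U, supEnvelope s u y S U ≤ ε := fun ε hε => by
    obtain ⟨δ, hδ, hδε⟩ := hstab ε hε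
    exact ⟨δ, hδ, fun S hS U => supEnvelope_le hε.le fun i hsi _ => hδε i (hsi.trans hS)⟩
  exact ⟨_, isKL_klMajorant (supEnvelope_nonneg hbdd) (supEnvelope_mono_left hbdd)
    (supEnvelope_antitone_right hbdd) hlim hsmall, fun i =>
      (le_supEnvelope hbdd i).trans (le_klMajorant (supEnvelope_mono_left hbdd)
        (supEnvelope_antitone_right hbdd) (hs i) _)⟩

end Envelope

def IsDissipative (α : ℝ → ℝ) (q : ℕ → ℝ) (t₀ : ℕ) (v : ℕ → ℝ) : Prop :=
  (∀ t, 0 ≤ v t) ∧ ∀ t, t₀ ≤ t → v (t + 1) ≤ v t - α (v t) + q t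

namespace IsDissipative

variable {α : ℝ → ℝ} {q v : ℕ → ℝ} {t₀ : ℕ}

lemma le_max (hα : IsKInf α) (hv : IsDissipative α q t₀ v) {M C : ℝ} (hM : ∀ t, q t ≤ M)
    (hC : ∀ z ≥ C, M ≤ α z) : ∀ t, t₀ ≤ t → v t ≤ max (v t₀) (C + M) := by
  intro t ht
  induction t, ht using Nat.le_induction with
  | base => exact le_max_left _ _
  | succ t ht ih =>
    have hstep := hv.2 t ht
    have hqt := hM t
    rcases lt_or_ge (v t) C with h | h
    · have := hα.nonneg (hv.1 t)
      exact le_max_of_le_right (by linarith)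
    · have := hC _ h
      linarith

/-- Once `q ≤ δ`, `v` drops by `δ` per step while it is above `ε / 2`, and cannot rise above `ε`
from below `ε / 2`. -/
lemma le_max_sub (hα : IsKInf α) (hv : IsDissipative α q t₀ v) {ε δ : ℝ} {T t₁ : ℕ}
    (hε : 0 < ε) (hδ : 0 < δ) (hδα : 2 * δ ≤ α (ε / 2)) (hδε : 2 * δ ≤ ε)
    (hq : ∀ t, T ≤ t → q t ≤ δ) (ht₁ : t₀ ≤ t₁) (hT : T ≤ t₁) :
    ∀ k : ℕ, v (t₁ + k) ≤ max (v t₁ - k * δ) ε := by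
  intro k
  induction k with
  | zero => simp
  | succ k ih =>
    have hstep := hv.2 (t₁ + k) (by omega)
    have hqk := hq (t₁ + k) (by omega)
    rw [← add_assoc]
    push_cast
    rcases lt_or_ge (v (t₁ + k)) (ε / 2) with h | h
    · have := hα.nonneg (hv.1 (t₁ + k))
      exact le_max_of_le_right (by linarith)
    · have := hα.apply_le_apply (by positivity) h
      rcases le_max_iff.1 ih with h' | h'
      · exact le_max_of_le_left (by linarith)
      · exact le_max_of_le_right (by linarith)

end IsDissipative

section Dissipative

variable {α : ℝ → ℝ} {q : ℕ → ℝ}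

lemma exists_le_max_of_isDissipative (hα : IsKInf α) (hq : BddAbove (range q)) :
    ∃ R, ∀ t₀ v, IsDissipative α q t₀ v → ∀ t, t₀ ≤ t → v t ≤ max (v t₀) R := by
  obtain ⟨M, hM⟩ := hq
  obtain ⟨C, hC⟩ := eventually_atTop.1 (hα.2.2.2.eventually_ge_atTop M)
  exact ⟨C + M, fun t₀ v hv => hv.le_max hα (fun t => hM ⟨t, rfl⟩) hC⟩

lemma exists_le_max_sub_of_isDissipative (hα : IsKInf α) (hq : Tendsto q atTop (𝓝 0)) {ε : ℝ}
    (hε : 0 < ε) : ∃ δ > 0, ∃ T : ℕ, ∀ t₀ v, IsDissipative α q t₀ v → ∀ t₁, t₀ ≤ t₁ → T ≤ t₁ →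
      ∀ k : ℕ, v (t₁ + k) ≤ max (v t₁ - k * δ) ε := by
  have hδ : 0 < min (α (ε / 2)) ε / 2 := half_pos (lt_min (hα.pos (half_pos hε)) hε)
  obtain ⟨T, hT⟩ := eventually_atTop.1 (hq.eventually_le_const hδ)
  have hδα : 2 * (min (α (ε / 2)) ε / 2) ≤ α (ε / 2) := by linarith [min_le_left (α (ε / 2)) ε]
  have hδε : 2 * (min (α (ε / 2)) ε / 2) ≤ ε := by linarith [min_le_right (α (ε / 2)) ε]
  exact ⟨_, hδ, T, fun t₀ v hv t₁ ht₁ hT₁ => hv.le_max_sub hα hε hδ hδα hδε hT ht₁ hT₁⟩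

lemma exists_forall_le_of_isDissipative (hα : IsKInf α) (hq : Tendsto q atTop (𝓝 0)) {ε : ℝ}
    (hε : 0 < ε) : ∃ T : ℕ, ∀ t₀ v, IsDissipative α q t₀ v → ∀ t₁, t₀ ≤ t₁ → T ≤ t₁ →
      v t₁ ≤ ε → ∀ t, t₁ ≤ t → v t ≤ ε := by
  obtain ⟨δ, hδ, T, hdecay⟩ := exists_le_max_sub_of_isDissipative hα hq hε
  refine ⟨T, fun t₀ v hv t₁ ht₁ hT₁ hv₁ t ht => ?_⟩
  obtain ⟨k, rfl⟩ := Nat.exists_eq_add_of_le ht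
  exact (hdecay t₀ v hv t₁ ht₁ hT₁ k).trans (max_le (by nlinarith [k.cast_nonneg (α := ℝ)]) le_rfl)

lemma exists_forall_add_le_of_isDissipative (hα : IsKInf α) (hq : Tendsto q atTop (𝓝 0))
    {ε : ℝ} (hε : 0 < ε) (R : ℝ) : ∃ U : ℕ, ∀ t₀ v, IsDissipative α q t₀ v → v t₀ ≤ R →
      ∀ t, t₀ + U ≤ t → v t ≤ ε := by
  obtain ⟨δ, hδ, T, hdecay⟩ := exists_le_max_sub_of_isDissipative hα hq hε
  obtain ⟨R', hR'⟩ := exists_le_max_of_isDissipative hα hq.bddAbove_range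
  refine ⟨T + ⌈max R R' / δ⌉₊, fun t₀ v hv hv₀ t ht => ?_⟩
  obtain ⟨k, rfl⟩ := Nat.exists_eq_add_of_le (show max t₀ T ≤ t by omega)
  have hv₁ : v (max t₀ T) ≤ max R R' :=
    (hR' t₀ v hv _ (le_max_left _ _)).trans (max_le_max_right _ hv₀)
  have hk : max R R' ≤ k * δ := by
    have hceil : max R R' / δ ≤ k := (Nat.le_ceil _).trans (by exact_mod_cast (by omega))
    rwa [div_le_iff₀ hδ] at hceil
  exact (hdecay t₀ v hv _ (le_max_left _ _) (le_max_right _ _) k).trans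
    (max_le (by linarith) le_rfl)

end Dissipative

section Solutions

variable {X Y D : Type*} {f : ℕ → D → X → X}

def IsSolution (f : ℕ → D → X → X) (d : ℕ → D) (t₀ : ℕ) (x : ℕ → X) : Prop :=
  ∀ t, t₀ ≤ t → x (t + 1) = f t (d t) (x t)

lemma IsSolution.isDissipative {V : ℕ → X → ℝ} {α : ℝ → ℝ} {q : ℕ → ℝ} {d : ℕ → D} {t₀ : ℕ}
    {x : ℕ → X} (hx : IsSolution f d t₀ x) (hV : ∀ t x, 0 ≤ V t x)
    (hVdec : ∀ t d x, V (t + 1) (f t d x) ≤ V t x - α (V t x) + q t) :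
    IsDissipative α q t₀ fun t => V t (x t) :=
  ⟨fun t => hV t (x t), fun t ht => by simpa only [hx t ht] using hVdec t (d t) (x t)⟩

variable [NormedAddCommGroup X] [NormedAddCommGroup Y]

lemma exists_norm_le_of_isSolution {a β : ℝ → ℝ} (ha : IsKInf a) (hβ : ∀ t : ℕ, 0 ≤ β t)
    (hfa : ∀ (t : ℕ) d x, ‖f t d x‖ ≤ a (β t * ‖x‖)) (T : ℕ) {η : ℝ} (hη : 0 < η) :
    ∃ δ > 0, ∀ d t₀ x, IsSolution f d t₀ x → ‖x t₀‖ ≤ δ → ∀ t, t₀ ≤ t → t ≤ T → ‖x t‖ ≤ η := by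
  induction T generalizing η with
  | zero =>
    refine ⟨η, hη, fun d t₀ x _ hx₀ t ht htT => ?_⟩
    obtain rfl : t₀ = t := by omega
    exact hx₀
  | succ T ih =>
    obtain ⟨η', hη', haη'⟩ := ha.exists_pos_apply_mul_le (hβ T) hη
    obtain ⟨δ, hδ, hδη⟩ := ih (lt_min hη hη')
    refine ⟨min δ η, lt_min hδ hη, fun d t₀ x hx hx₀ t ht htT => ?_⟩
    rcases Nat.lt_or_ge T t with hTt | htT'
    · obtain rfl : t = T + 1 := by omega
      rcases ht.eq_or_lt with rfl | ht₀
      · exact hx₀.trans (min_le_right _ _)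
      have hxT := (hδη d t₀ x hx (hx₀.trans (min_le_left _ _)) T (by omega) le_rfl).trans
        (min_le_right _ _)
      rw [hx T (by omega)]
      exact (hfa _ _ _).trans ((ha.apply_le_apply (mul_nonneg (hβ T) (norm_nonneg _))
        (mul_le_mul_of_nonneg_left hxT (hβ T))).trans haη')
    · exact (hδη d t₀ x hx (hx₀.trans (min_le_left _ _)) t ht htT').trans (min_le_left _ _)

structure ObservedSolution (f : ℕ → D → X → X) where
  d : ℕ → D
  t₀ : ℕ
  x : ℕ → X
  t : ℕ
  isSolution : IsSolution f d t₀ x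
  le : t₀ ≤ t

variable {H : ℕ → X → Y} {V : ℕ → X → ℝ} {a₁ a₂ a₃ : ℝ → ℝ} {q β' : ℕ → ℝ}

lemma ObservedSolution.exists_norm_le (ha₁ : IsKInf a₁) (ha₂ : IsKInf a₂) (ha₃ : IsKInf a₃)
    (hq : Tendsto q atTop (𝓝 0)) (hβ' : ∀ t, 0 ≤ β' t) (hH : ∀ t x, a₁ ‖H t x‖ ≤ V t x)
    (hV : ∀ t x, V t x ≤ a₂ (β' t * ‖x‖))
    (hdiss : ∀ d t₀ x, IsSolution f d t₀ x → IsDissipative a₃ q t₀ fun t => V t (x t)) (S : ℝ) :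
    ∃ B, ∀ γ : ObservedSolution f, β' γ.t₀ * ‖γ.x γ.t₀‖ ≤ S → ‖H γ.t (γ.x γ.t)‖ ≤ B := by
  obtain ⟨R, hR⟩ := exists_le_max_of_isDissipative ha₃ hq.bddAbove_range
  obtain ⟨B, hB⟩ := ha₁.exists_forall_le_of_apply_le (max (a₂ S) R)
  refine ⟨B, fun γ hγ => hB _ (norm_nonneg _) ((hH _ _).trans ?_)⟩
  refine (hR γ.t₀ _ (hdiss _ _ _ γ.isSolution) γ.t γ.le).trans (max_le_max_right _ ?_)
  exact (hV _ _).trans (ha₂.apply_le_apply (mul_nonneg (hβ' _) (norm_nonneg _)) hγ)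

lemma ObservedSolution.exists_norm_le_of_le_sub (ha₁ : IsKInf a₁) (ha₂ : IsKInf a₂)
    (ha₃ : IsKInf a₃) (hq : Tendsto q atTop (𝓝 0)) (hβ' : ∀ t, 0 ≤ β' t)
    (hH : ∀ t x, a₁ ‖H t x‖ ≤ V t x) (hV : ∀ t x, V t x ≤ a₂ (β' t * ‖x‖))
    (hdiss : ∀ d t₀ x, IsSolution f d t₀ x → IsDissipative a₃ q t₀ fun t => V t (x t))
    (S : ℝ) {ε : ℝ} (hε : 0 < ε) :
    ∃ U : ℝ, ∀ γ : ObservedSolution f, β' γ.t₀ * ‖γ.x γ.t₀‖ ≤ S → U ≤ (γ.t : ℝ) - γ.t₀ →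
      ‖H γ.t (γ.x γ.t)‖ ≤ ε := by
  obtain ⟨U, hU⟩ := exists_forall_add_le_of_isDissipative ha₃ hq (ha₁.pos hε) (a₂ S)
  refine ⟨U, fun γ hγ hUt => ha₁.le_of_apply_le (norm_nonneg _) hε.le ((hH _ _).trans ?_)⟩
  refine hU γ.t₀ _ (hdiss _ _ _ γ.isSolution) ?_ γ.t ?_
  · exact (hV _ _).trans (ha₂.apply_le_apply (mul_nonneg (hβ' _) (norm_nonneg _)) hγ)
  · exact_mod_cast (by push_cast; linarith : ((γ.t₀ + U : ℕ) : ℝ) ≤ γ.t)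

lemma ObservedSolution.exists_pos_norm_le {a β : ℝ → ℝ} (ha : IsKInf a) (hβ : ∀ t : ℕ, 0 ≤ β t)
    (hfa : ∀ (t : ℕ) d x, ‖f t d x‖ ≤ a (β t * ‖x‖)) (ha₁ : IsKInf a₁) (ha₂ : IsKInf a₂)
    (ha₃ : IsKInf a₃) (hq : Tendsto q atTop (𝓝 0)) (hβ' : ∀ t, 1 ≤ β' t)
    (hH : ∀ t x, a₁ ‖H t x‖ ≤ V t x) (hV : ∀ t x, V t x ≤ a₂ (β' t * ‖x‖))
    (hdiss : ∀ d t₀ x, IsSolution f d t₀ x → IsDissipative a₃ q t₀ fun t => V t (x t))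
    {ε : ℝ} (hε : 0 < ε) :
    ∃ δ > 0, ∀ γ : ObservedSolution f, β' γ.t₀ * ‖γ.x γ.t₀‖ ≤ δ → ‖H γ.t (γ.x γ.t)‖ ≤ ε := by
  obtain ⟨T, hT⟩ := exists_forall_le_of_isDissipative ha₃ hq (ha₁.pos hε)
  obtain ⟨B, hB⟩ := ((finite_Iic T).image β').bddAbove
  have hB1 : 1 ≤ B := (hβ' 0).trans (hB ⟨0, T.zero_le, rfl⟩)
  obtain ⟨η, hη, hηε⟩ := ha₂.exists_pos_apply_mul_le (by linarith : 0 ≤ B) (ha₁.pos hε)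
  obtain ⟨δ, hδ, hδη⟩ := exists_norm_le_of_isSolution ha hβ hfa T hη
  refine ⟨min δ (B * η), lt_min hδ (by positivity), fun ⟨d, t₀, x, t, hx, ht⟩ hx₀ => ?_⟩
  have hβ'0 : ∀ τ, 0 ≤ β' τ := fun τ => zero_le_one.trans (hβ' τ)
  have hearly : ∀ τ, t₀ ≤ τ → τ ≤ T → V τ (x τ) ≤ a₁ ε := fun τ h₁ h₂ => by
    have hxτ := hδη d t₀ x hx ((le_mul_of_one_le_left (norm_nonneg _) (hβ' t₀)).trans
      (hx₀.trans (min_le_left _ _))) τ h₁ h₂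
    exact (hV _ _).trans ((ha₂.apply_le_apply (mul_nonneg (hβ'0 τ) (norm_nonneg _))
      (mul_le_mul (hB ⟨τ, h₂, rfl⟩) hxτ (norm_nonneg _) (by linarith))).trans hηε)
  have hstart : V t₀ (x t₀) ≤ a₁ ε := (hV _ _).trans ((ha₂.apply_le_apply
    (mul_nonneg (hβ'0 t₀) (norm_nonneg _)) (hx₀.trans (min_le_right _ _))).trans hηε)
  refine ha₁.le_of_apply_le (norm_nonneg _) hε.le ((hH _ _).trans ?_)
  rcases le_total t T with htT | hTt
  · exact hearly t ht htT
  rcases le_total t₀ T with ht₀T | hTt₀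
  · exact hT t₀ _ (hdiss d t₀ x hx) T ht₀T le_rfl (hearly T ht₀T le_rfl) t hTt
  · exact hT t₀ _ (hdiss d t₀ x hx) t₀ le_rfl hTt₀ hstart t ht

end Solutions

theorem prop22_iii_implies_i_general {X Y D : Type*}
    [NormedAddCommGroup X] [NormedAddCommGroup Y]
    (f : ℕ → D → X → X) (H : ℕ → X → Y)
    (hH1 : ∃ a β : ℝ → ℝ, IsKInf a ∧ IsKPlus β ∧
      ∀ (t : ℕ) (d : D) (x : X), ‖f t d x‖ ≤ a (β t * ‖x‖))
    (V : ℕ → X → ℝ) (a₁ a₂ a₃ β q : ℝ → ℝ)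
    (hVnonneg : ∀ (t : ℕ) (x : X), 0 ≤ V t x)
    (ha₁ : IsKInf a₁) (ha₂ : IsKInf a₂) (ha₃ : IsKInf a₃)
    (hβ : IsKPlus β)
    (hqlim : Filter.Tendsto q Filter.atTop (nhds 0))
    (hVbound : ∀ (t : ℕ) (x : X), a₁ ‖H t x‖ ≤ V t x ∧ V t x ≤ a₂ (β t * ‖x‖))
    (hVdec : ∀ (t : ℕ) (d : D) (x : X),
      V (t + 1) (f t d x) ≤ V t x - a₃ (V t x) + q t) :
    ∃ (σ : ℝ → ℝ → ℝ) (β' : ℝ → ℝ), IsKL σ ∧ IsKPlus β' ∧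
      ∀ (d : ℕ → D) (t₀ : ℕ) (x₀ : X) (x : ℕ → X),
        x t₀ = x₀ → (∀ t, t₀ ≤ t → x (t + 1) = f t (d t) (x t)) →
        ∀ t, t₀ ≤ t → ‖H t (x t)‖ ≤ σ (β' t₀ * ‖x₀‖) ((t : ℝ) - (t₀ : ℝ)) := by
  obtain ⟨a, βf, ha, hβf, hfa⟩ := hH1
  have hβf0 : ∀ t : ℕ, 0 ≤ βf t := fun t => (hβf.2 t t.cast_nonneg).le
  set β' : ℝ → ℝ := fun r => max 1 (β r)
  have hβ' : ∀ t : ℕ, 1 ≤ β' t := fun t => le_max_left _ _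
  have hβ'0 : ∀ t : ℕ, 0 ≤ β' t := fun t => zero_le_one.trans (hβ' t)
  have hV : ∀ (t : ℕ) x, V t x ≤ a₂ (β' t * ‖x‖) := fun t x =>
    (hVbound t x).2.trans (ha₂.apply_le_apply (mul_nonneg (hβ.2 t t.cast_nonneg).le (norm_nonneg _))
      (mul_le_mul_of_nonneg_right (le_max_right _ _) (norm_nonneg _)))
  have hq : Tendsto (fun t : ℕ => q t) atTop (𝓝 0) := hqlim.comp tendsto_natCast_atTop_atTop
  have hdiss : ∀ d t₀ x, IsSolution f d t₀ x → IsDissipative a₃ (fun t : ℕ => q t) t₀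
      fun t => V t (x t) := fun _ _ _ hx => hx.isDissipative hVnonneg hVdec
  have hH : ∀ t x, a₁ ‖H t x‖ ≤ V t x := fun t x => (hVbound t x).1
  obtain ⟨σ, hσ, hσbound⟩ := exists_isKL_bound
    (s := fun γ : ObservedSolution f => β' γ.t₀ * ‖γ.x γ.t₀‖) (u := fun γ => (γ.t : ℝ) - γ.t₀)
    (y := fun γ => ‖H γ.t (γ.x γ.t)‖) (fun γ => mul_nonneg (hβ'0 _) (norm_nonneg _))
    (ObservedSolution.exists_norm_le ha₁ ha₂ ha₃ hq hβ'0 hH hV hdiss)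
    (fun S _ hε => ObservedSolution.exists_norm_le_of_le_sub ha₁ ha₂ ha₃ hq hβ'0 hH hV hdiss S hε)
    (fun _ hε => ObservedSolution.exists_pos_norm_le ha hβf0 hfa ha₁ ha₂ ha₃ hq hβ' hH hV hdiss hε)
  refine ⟨σ, β', hσ, ⟨continuousOn_const.sup hβ.1, fun t _ => one_pos.trans_le (le_max_left _ _)⟩,
    ?_⟩
  rintro d t₀ _ x rfl hx t ht
  exact hσbound ⟨d, t₀, x, t, hx, ht⟩

/-- Proposition 2.2, (iii) ⇒ (i): Lyapunov sufficiency for non-uniform in time RGAOS. -/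
theorem prop22_iii_implies_i {X Y D : Type*}
    [NormedAddCommGroup X] [NormedSpace ℝ X] [NormedAddCommGroup Y] [NormedSpace ℝ Y]
    [Nonempty D]
    (f : ℕ → D → X → X) (H : ℕ → X → Y)
    (hf0 : ∀ (t : ℕ) (d : D), f t d 0 = 0) (hH0 : ∀ t : ℕ, H t 0 = 0)
    (hH1 : ∃ a β : ℝ → ℝ, IsKInf a ∧ IsKPlus β ∧
      ∀ (t : ℕ) (d : D) (x : X), ‖f t d x‖ ≤ a (β t * ‖x‖))
    (hH2 : ∀ (T : ℕ) (S : Set X), Bornology.IsBounded S → ∀ ε > (0 : ℝ),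
      Bornology.IsBounded {y : Y | ∃ t ≤ T, ∃ x ∈ S, y = H t x} ∧
      ∃ δ > (0 : ℝ), ∀ t ≤ T, ∀ x ∈ S, ∀ x₀ ∈ S, ‖x - x₀‖ < δ → ‖H t x - H t x₀‖ < ε)
    (V : ℕ → X → ℝ) (a₁ a₂ a₃ β q : ℝ → ℝ)
    (hVnonneg : ∀ (t : ℕ) (x : X), 0 ≤ V t x)
    (ha₁ : IsKInf a₁) (ha₂ : IsKInf a₂) (ha₃ : IsKInf a₃)
    (ha₃le : ∀ s : ℝ, 0 ≤ s → a₃ s ≤ s)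
    (hβ : IsKPlus β)
    (hqcont : ContinuousOn q (Set.Ici 0)) (hqnonneg : ∀ t : ℝ, 0 ≤ t → 0 ≤ q t)
    (hqlim : Filter.Tendsto q Filter.atTop (nhds 0))
    (hVbound : ∀ (t : ℕ) (x : X), a₁ ‖H t x‖ ≤ V t x ∧ V t x ≤ a₂ (β t * ‖x‖))
    (hVdec : ∀ (t : ℕ) (d : D) (x : X),
      V (t + 1) (f t d x) ≤ V t x - a₃ (V t x) + q t) :
    ∃ (σ : ℝ → ℝ → ℝ) (β' : ℝ → ℝ), IsKL σ ∧ IsKPlus β' ∧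
      ∀ (d : ℕ → D) (t₀ : ℕ) (x₀ : X) (x : ℕ → X),
        x t₀ = x₀ → (∀ t, t₀ ≤ t → x (t + 1) = f t (d t) (x t)) →
        ∀ t, t₀ ≤ t → ‖H t (x t)‖ ≤ σ (β' t₀ * ‖x₀‖) ((t : ℝ) - (t₀ : ℝ)) :=
  prop22_iii_implies_i_general f H hH1 V a₁ a₂ a₃ β q hVnonneg ha₁ ha₂ ha₃ hβ hqlim hVbound hVdec
end
end
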